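/- Let p : ℝ^n → ℝ be a sublinear (convex, positively homogeneous) continuous function, q_j : ℝ^n → ℝ, j = 1,...,k, sublinear continuous functions, and H ⊂ ℝ^n a closed convex cone. Suppose p(v) ≥ 0 for every v ∈ H with q_j(v) ≤ 0 for all j, and that there exists v_0 ∈ H with q_j(v_0) < 0 for all j (Slater condition). Then there exist λ_j ≥ 0 such that 0 ∈ ∂p(0) + Σ_j λ_j ∂q_j(0) + H°, where ∂ denotes the convex subdifferential at 0 and H° is the polar cone of H. -/

import Mathlib

open RealInnerProductSpace

variable {n : ℕ}

/-- The convex subdifferential at `0` of a sublinear function. -/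
def subdiffZero (p : EuclideanSpace ℝ (Fin n) → ℝ) : Set (EuclideanSpace ℝ (Fin n)) :=
  {xstar | ∀ v, ⟪xstar, v⟫ ≤ p v}

local notation "E" => EuclideanSpace ℝ (Fin n)

lemma exists_inner_le (N : E → ℝ)
    (hadd : ∀ v w, N (v + w) ≤ N v + N w)
    (hhom : ∀ (c : ℝ) v, 0 < c → N (c • v) = c * N v) :
    ∃ x : E, ∀ v, ⟪x, v⟫ ≤ N v := by
  have hN0 : 0 ≤ N 0 := by
    have := hadd 0 0
    simp at this; linarith
  obtain ⟨g, -, hg⟩ := exists_extension_of_le_sublinear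
    (⟨⊥, 0⟩ : (E →ₗ.[ℝ] ℝ)) N (fun c hc x => hhom c x hc) hadd
    (by rintro ⟨x, hx⟩
        simp only [Submodule.mem_bot] at hx
        subst hx
        simpa using hN0)
  have hgc : Continuous g := g.continuous_of_finiteDimensional
  refine ⟨(InnerProductSpace.toDual ℝ _).symm ⟨g, hgc⟩, fun v => ?_⟩
  rw [InnerProductSpace.toDual_symm_apply]
  exact hg v

/-- Sandwich theorem over a convex cone `S`: if `φ` is superlinear on `S`, `ψ` is sublinear,
and `φ ≤ ψ` on `S`, then there is a linear functional `⟪x, ·⟫` with `⟪x, ·⟫ ≤ ψ` globally and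
`φ ≤ ⟪x, ·⟫` on `S`. -/
lemma exists_inner_sandwich (ψ φ : E → ℝ) (S : Set E)
    (hS0 : (0 : E) ∈ S)
    (hSadd : ∀ w₁ ∈ S, ∀ w₂ ∈ S, w₁ + w₂ ∈ S)
    (hSsmul : ∀ w ∈ S, ∀ c : ℝ, 0 < c → c • w ∈ S)
    (hψadd : ∀ v w, ψ (v + w) ≤ ψ v + ψ w)
    (hψhom : ∀ (c : ℝ) v, 0 < c → ψ (c • v) = c * ψ v)
    (hψ0 : ψ 0 = 0)
    (hφ0 : φ 0 = 0)
    (hφsuper : ∀ w₁ ∈ S, ∀ w₂ ∈ S, φ w₁ + φ w₂ ≤ φ (w₁ + w₂))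
    (hφhom : ∀ (c : ℝ), 0 < c → ∀ w ∈ S, φ (c • w) = c * φ w)
    (hle : ∀ w ∈ S, φ w ≤ ψ w) :
    ∃ x : E, (∀ v, ⟪x, v⟫ ≤ ψ v) ∧ (∀ w ∈ S, φ w ≤ ⟪x, w⟫) := by
  set T : E → Set ℝ := fun v => (fun w => ψ (v + w) - φ w) '' S with hT
  have hne : ∀ v, (T v).Nonempty := fun v => ⟨ψ v - φ 0, ⟨0, hS0, by simp⟩⟩
  have hlb : ∀ v, ∀ a ∈ T v, -ψ (-v) ≤ a := by
    rintro v a ⟨w, hw, rfl⟩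
    show -ψ (-v) ≤ ψ (v + w) - φ w
    have h1 : ψ w ≤ ψ (v + w) + ψ (-v) := by
      have := hψadd (v + w) (-v)
      simpa [add_comm, add_assoc, add_left_comm] using this
    have h2 : φ w ≤ ψ w := hle w hw
    linarith
  have hbdd : ∀ v, BddBelow (T v) := fun v => ⟨-ψ (-v), fun a ha => hlb v a ha⟩
  set N : E → ℝ := fun v => sInf (T v) with hN
  have hNle : ∀ v, ∀ w ∈ S, N v ≤ ψ (v + w) - φ w := fun v w hw =>
    csInf_le (hbdd v) ⟨w, hw, rfl⟩
  have hNψ : ∀ v, N v ≤ ψ v := fun v => by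
    have := hNle v 0 hS0
    simpa [hφ0] using this
  -- subadditivity of N
  have hNadd : ∀ v₁ v₂, N (v₁ + v₂) ≤ N v₁ + N v₂ := by
    intro v₁ v₂
    have key : ∀ w₁ ∈ S, ∀ w₂ ∈ S,
        N (v₁ + v₂) ≤ (ψ (v₁ + w₁) - φ w₁) + (ψ (v₂ + w₂) - φ w₂) := by
      intro w₁ hw₁ w₂ hw₂
      have h1 := hNle (v₁ + v₂) (w₁ + w₂) (hSadd w₁ hw₁ w₂ hw₂)
      have h2 : ψ (v₁ + v₂ + (w₁ + w₂)) ≤ ψ (v₁ + w₁) + ψ (v₂ + w₂) := by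
        have := hψadd (v₁ + w₁) (v₂ + w₂)
        have e : v₁ + w₁ + (v₂ + w₂) = v₁ + v₂ + (w₁ + w₂) := by abel
        rwa [e] at this
      have h3 := hφsuper w₁ hw₁ w₂ hw₂
      linarith
    have h4 : ∀ w₁ ∈ S, N (v₁ + v₂) - (ψ (v₁ + w₁) - φ w₁) ≤ N v₂ := by
      intro w₁ hw₁
      apply le_csInf (hne v₂)
      rintro b ⟨w₂, hw₂, rfl⟩
      show N (v₁ + v₂) - (ψ (v₁ + w₁) - φ w₁) ≤ ψ (v₂ + w₂) - φ w₂
      have := key w₁ hw₁ w₂ hw₂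
      linarith
    have h5 : N (v₁ + v₂) - N v₂ ≤ N v₁ := by
      apply le_csInf (hne v₁)
      rintro a ⟨w₁, hw₁, rfl⟩
      show N (v₁ + v₂) - N v₂ ≤ ψ (v₁ + w₁) - φ w₁
      have := h4 w₁ hw₁
      linarith
    linarith
  -- positive homogeneity of N (≤ direction, then both)
  have hNsmul_le : ∀ (c : ℝ), 0 < c → ∀ v, N (c • v) ≤ c * N v := by
    intro c hc v
    rw [← div_le_iff₀' hc]
    apply le_csInf (hne v)
    rintro a ⟨w, hw, rfl⟩
    show N (c • v) / c ≤ ψ (v + w) - φ w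
    rw [div_le_iff₀' hc]
    have h1 := hNle (c • v) (c • w) (hSsmul w hw c hc)
    rw [← smul_add, hψhom c _ hc, hφhom c hc w hw] at h1
    rw [mul_sub]
    linarith [h1]
  have hNsmul : ∀ (c : ℝ), 0 < c → ∀ v, N (c • v) = c * N v := by
    intro c hc v
    refine le_antisymm (hNsmul_le c hc v) ?_
    have h1 := hNsmul_le c⁻¹ (by positivity) (c • v)
    rw [inv_smul_smul₀ hc.ne' v] at h1
    calc c * N v ≤ c * (c⁻¹ * N (c • v)) := by
          exact mul_le_mul_of_nonneg_left h1 hc.le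
      _ = N (c • v) := by field_simp
  obtain ⟨x, hx⟩ := exists_inner_le N hNadd (fun c v hc => hNsmul c hc v)
  refine ⟨x, fun v => (hx v).trans (hNψ v), fun w hw => ?_⟩
  have h1 := (hx (-w)).trans (hNle (-w) w hw)
  simp only [neg_add_cancel, hψ0] at h1
  rw [inner_neg_right] at h1
  linarith

lemma aux_nonpos (A B : ℝ) (h : ∀ ε : ℝ, 0 < ε → A + ε * B < 0) : A ≤ 0 := by
  by_contra h'
  push_neg at h'
  rcases le_or_gt 0 B with hB | hB
  · have := h 1 one_pos; nlinarith
  · have hB' : B ≠ 0 := hB.ne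
    have h2 := h (A / (2 * -B)) (div_pos h' (by linarith))
    have h3 : A + A / (2 * -B) * B = A / 2 := by field_simp; ring
    rw [h3] at h2; linarith

lemma exists_lam {k : ℕ} (p : E → ℝ) (q : Fin k → E → ℝ) (H : Set E)
    (hp_sub : ∀ v w, p (v + w) ≤ p v + p w)
    (hp_hom : ∀ (c : ℝ) v, 0 ≤ c → p (c • v) = c * p v)
    (hq_sub : ∀ j v w, q j (v + w) ≤ q j v + q j w)
    (hq_hom : ∀ j (c : ℝ) v, 0 ≤ c → q j (c • v) = c * q j v)
    (hH_conv : Convex ℝ H)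
    (hH0 : (0 : E) ∈ H)
    (hopt : ∀ v ∈ H, (∀ j, q j v ≤ 0) → 0 ≤ p v)
    (hslater : ∃ v₀ ∈ H, ∀ j, q j v₀ < 0) :
    ∃ lam : Fin k → ℝ, (∀ j, 0 ≤ lam j) ∧
      ∀ v ∈ H, 0 ≤ p v + ∑ j, lam j * q j v := by
  have hp0 : p 0 = 0 := by
    have := hp_hom 0 0 le_rfl
    simpa using this
  have hq0 : ∀ j, q j 0 = 0 := fun j => by
    have := hq_hom j 0 0 le_rfl
    simpa using this
  set D : Set (ℝ × (Fin k → ℝ)) :=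
    Set.Iio (0:ℝ) ×ˢ Set.univ.pi (fun _ : Fin k => Set.Iio (0:ℝ)) with hD
  have hDmem : ∀ x : ℝ × (Fin k → ℝ), x ∈ D ↔ x.1 < 0 ∧ ∀ j, x.2 j < 0 := by
    intro x
    rw [hD, Set.mem_prod]
    simp [Set.mem_pi]
  set C : Set (ℝ × (Fin k → ℝ)) :=
    {x : ℝ × (Fin k → ℝ) | ∃ v ∈ H, p v ≤ x.1 ∧ ∀ j, q j v ≤ x.2 j} with hC
  have hDopen : IsOpen D := isOpen_Iio.prod (isOpen_set_pi Set.finite_univ fun _ _ => isOpen_Iio)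
  have hDconv : Convex ℝ D := (convex_Iio 0).prod (convex_pi fun _ _ => convex_Iio 0)
  have hCconv : Convex ℝ C := by
    rintro x ⟨vx, hvx, hpx, hqx⟩ y ⟨vy, hvy, hpy, hqy⟩ a b ha hb hab
    refine ⟨a • vx + b • vy, hH_conv hvx hvy ha hb hab, ?_, ?_⟩
    · have h2 : (a • x + b • y).1 = a * x.1 + b * y.1 := rfl
      rw [h2]
      calc p (a • vx + b • vy) ≤ p (a • vx) + p (b • vy) := hp_sub _ _
        _ = a * p vx + b * p vy := by rw [hp_hom a vx ha, hp_hom b vy hb]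
        _ ≤ a * x.1 + b * y.1 := by
            have h3 := mul_le_mul_of_nonneg_left hpx ha
            have h4 := mul_le_mul_of_nonneg_left hpy hb
            linarith
    · intro j
      have h2 : (a • x + b • y).2 j = a * x.2 j + b * y.2 j := rfl
      rw [h2]
      calc q j (a • vx + b • vy) ≤ q j (a • vx) + q j (b • vy) := hq_sub j _ _
        _ = a * q j vx + b * q j vy := by rw [hq_hom j a vx ha, hq_hom j b vy hb]
        _ ≤ a * x.2 j + b * y.2 j := by
            have h3 := mul_le_mul_of_nonneg_left (hqx j) ha
            have h4 := mul_le_mul_of_nonneg_left (hqy j) hb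
            linarith
  have hdisj : Disjoint D C := by
    rw [Set.disjoint_left]
    rintro x hxD ⟨v, hv, hpv, hqv⟩
    rw [hDmem] at hxD
    have h1 : ∀ j, q j v ≤ 0 := fun j => (hqv j).trans (hxD.2 j).le
    have := hopt v hv h1
    linarith [hpv, hxD.1]
  obtain ⟨f, u, hfD, hfC⟩ := geometric_hahn_banach_open hDconv hDopen hCconv hdisj
  have hC0 : ((0:ℝ), (0 : Fin k → ℝ)) ∈ C := ⟨0, hH0, by simp [hp0], by simp [hq0]⟩
  have hu1 : u ≤ 0 := by
    have h1 := hfC _ hC0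
    have h0 : f ((0:ℝ), (0 : Fin k → ℝ)) = 0 := by
      have he : ((0:ℝ), (0 : Fin k → ℝ)) = (0 : ℝ × (Fin k → ℝ)) := rfl
      rw [he, map_zero]
    rw [h0] at h1
    exact h1
  set d : ℝ × (Fin k → ℝ) := ((-1:ℝ), fun _ : Fin k => (-1:ℝ)) with hd
  have hdD : ∀ ε : ℝ, 0 < ε → ε • d ∈ D := by
    intro ε hε
    rw [hDmem]
    constructor
    · show ε * (-1) < 0; nlinarith
    · intro j; show ε * (-1) < 0; nlinarith
  have hu2 : 0 ≤ u := by
    have h1 : ∀ ε : ℝ, 0 < ε → -u + ε * f d < 0 := by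
      intro ε hε
      have h2 := hfD _ (hdD ε hε)
      rw [map_smul] at h2
      simp only [smul_eq_mul] at h2
      linarith
    have := aux_nonpos (-u) (f d) h1
    linarith
  have hu0 : u = 0 := le_antisymm hu1 hu2
  have hfD0 : ∀ x : ℝ × (Fin k → ℝ), x.1 ≤ 0 → (∀ j, x.2 j ≤ 0) → f x ≤ 0 := by
    intro x h1 h2
    apply aux_nonpos (f x) (f d)
    intro ε hε
    have hmem : x + ε • d ∈ D := by
      rw [hDmem]
      constructor
      · show x.1 + ε * (-1) < 0; nlinarith
      · intro j; show x.2 j + ε * (-1) < 0; nlinarith [h2 j]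
    have h3 := hfD _ hmem
    rw [map_add, map_smul] at h3
    simp only [smul_eq_mul] at h3
    linarith
  set c0 : ℝ := f ((1:ℝ), (0 : Fin k → ℝ)) with hc0def
  set cj : Fin k → ℝ := fun j => f ((0:ℝ), (Pi.single j 1 : Fin k → ℝ)) with hcjdef
  have hc0 : 0 ≤ c0 := by
    have h1 : f ((-1:ℝ), (0 : Fin k → ℝ)) ≤ 0 := by
      apply hfD0 <;> simp
    have h2 : ((-1:ℝ), (0 : Fin k → ℝ)) = -((1:ℝ), (0 : Fin k → ℝ)) := by
      simp [Prod.ext_iff]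
    rw [h2, map_neg] at h1
    rw [hc0def]
    linarith
  have hcj : ∀ j, 0 ≤ cj j := by
    intro j
    have h1 : f ((0:ℝ), -(Pi.single j 1 : Fin k → ℝ)) ≤ 0 := by
      apply hfD0
      · exact le_rfl
      · intro i
        show -(Pi.single j 1 : Fin k → ℝ) i ≤ 0
        simp only [Pi.neg_apply, neg_nonpos, Pi.single_apply]
        split <;> norm_num
    have h2 : ((0:ℝ), -(Pi.single j 1 : Fin k → ℝ)) = -((0:ℝ), (Pi.single j 1 : Fin k → ℝ)) := by
      simp [Prod.ext_iff]
    rw [h2, map_neg] at h1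
    rw [hcjdef]
    simp only
    linarith
  have hexp : ∀ x : ℝ × (Fin k → ℝ), f x = x.1 * c0 + ∑ j, x.2 j * cj j := by
    intro x
    have hx2 : x = x.1 • ((1:ℝ), (0 : Fin k → ℝ))
        + ∑ j, x.2 j • ((0:ℝ), (Pi.single j 1 : Fin k → ℝ)) := by
      refine Prod.ext ?_ ?_
      · simp [Prod.fst_sum]
      · have hsingle : ∀ j, x.2 j • (Pi.single j 1 : Fin k → ℝ) = Pi.single j (x.2 j) := by
          intro j
          rw [← Pi.single_smul]
          norm_num
        rw [Prod.snd_add, Prod.snd_sum]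
        simp only [Prod.smul_snd, smul_zero, hsingle]
        rw [Finset.univ_sum_single x.2, zero_add]
    conv_lhs => rw [hx2]
    rw [map_add, map_smul, map_sum]
    simp only [smul_eq_mul, map_smul]
    rfl
  have hCf : ∀ v ∈ H, 0 ≤ c0 * p v + ∑ j, cj j * q j v := by
    intro v hv
    have hmem : ((p v : ℝ), fun j => q j v) ∈ C := ⟨v, hv, le_rfl, fun j => le_rfl⟩
    have h1 := hfC _ hmem
    rw [hexp] at h1
    simp only at h1
    rw [hu0] at h1
    have he : ∑ j, q j v * cj j = ∑ j, cj j * q j v := by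
      apply Finset.sum_congr rfl; intro j _; ring
    rw [he] at h1
    linarith
  have hc0pos : 0 < c0 := by
    rcases hc0.lt_or_eq with h | h
    · exact h
    · exfalso
      obtain ⟨v₀, hv₀, hsl⟩ := hslater
      have h1 := hCf v₀ hv₀
      rw [← h, zero_mul, zero_add] at h1
      have h2 : ∀ j ∈ Finset.univ, cj j * q j v₀ ≤ 0 := fun j _ =>
        mul_nonpos_of_nonneg_of_nonpos (hcj j) (hsl j).le
      have h3 : ∑ j, cj j * q j v₀ = 0 :=
        le_antisymm (Finset.sum_nonpos h2) h1
      have h4 : ∀ j, cj j = 0 := by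
        intro j
        have := (Finset.sum_eq_zero_iff_of_nonpos h2).mp h3 j (Finset.mem_univ j)
        rcases mul_eq_zero.mp this with h5 | h5
        · exact h5
        · exact absurd h5 (hsl j).ne
      have hf0 : ∀ x : ℝ × (Fin k → ℝ), f x = 0 := by
        intro x
        rw [hexp, ← h]
        simp [h4]
      have hdmem : d ∈ D := by
        have := hdD 1 one_pos
        simpa using this
      have := hfD d hdmem
      rw [hf0 d, hu0] at this
      exact lt_irrefl 0 this
  refine ⟨fun j => cj j / c0, fun j => div_nonneg (hcj j) hc0pos.le, ?_⟩
  intro v hv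
  have h1 := hCf v hv
  have h2 : ∑ j, cj j / c0 * q j v = (∑ j, cj j * q j v) / c0 := by
    rw [Finset.sum_div]
    apply Finset.sum_congr rfl
    intro j _; ring
  rw [h2]
  rw [← mul_div_cancel_left₀ (p v) hc0pos.ne', ← add_div]
  exact div_nonneg h1 hc0pos.le

lemma decomp {k : ℕ} (p : E → ℝ) (q : Fin k → E → ℝ) (lam : Fin k → ℝ)
    (hp_sub : ∀ v w, p (v + w) ≤ p v + p w)
    (hp_hom : ∀ (c : ℝ) v, 0 < c → p (c • v) = c * p v)
    (hp0 : p 0 = 0)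
    (hq_sub : ∀ j v w, q j (v + w) ≤ q j v + q j w)
    (hq_hom : ∀ j (c : ℝ) v, 0 < c → q j (c • v) = c * q j v)
    (hq0 : ∀ j, q j 0 = 0)
    (hlam : ∀ j, 0 ≤ lam j)
    (s : Finset (Fin k)) (x : E)
    (hx : ∀ v, ⟪x, v⟫ ≤ p v + ∑ j ∈ s, lam j * q j v) :
    ∃ u ∈ subdiffZero p, ∃ w : Fin k → E,
      (∀ j, w j ∈ subdiffZero (q j)) ∧ u + ∑ j ∈ s, lam j • w j = x := by
  have hwch : ∀ j, ∃ y : E, y ∈ subdiffZero (q j) := fun j =>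
    exists_inner_le (q j) (hq_sub j) (hq_hom j)
  choose w₀ hw₀ using hwch
  induction s using Finset.induction_on generalizing x with
  | empty =>
    refine ⟨x, fun v => by simpa using hx v, w₀, hw₀, by simp⟩
  | insert _ _ ha =>
    rename_i a s ih
    simp only [Finset.sum_insert ha] at hx
    obtain ⟨x', hx'₁, hx'₂⟩ := exists_inner_sandwich
      (fun v => p v + ∑ j ∈ s, lam j * q j v)
      (fun v => ⟪x, v⟫ - lam a * q a v) Set.univ
      (Set.mem_univ 0) (fun _ _ _ _ => Set.mem_univ _) (fun _ _ _ _ => Set.mem_univ _)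
      (by
        intro v w
        have h1 := hp_sub v w
        have h2 : ∑ j ∈ s, lam j * q j (v + w) ≤
            ∑ j ∈ s, (lam j * q j v + lam j * q j w) := by
          apply Finset.sum_le_sum
          intro j _
          have := mul_le_mul_of_nonneg_left (hq_sub j v w) (hlam j)
          linarith [this]
        rw [Finset.sum_add_distrib] at h2
        linarith)
      (by
        intro c v hc
        rw [hp_hom c v hc, mul_add, Finset.mul_sum]
        congr 1
        apply Finset.sum_congr rfl
        intro j _
        rw [hq_hom j c v hc]; ring)
      (by simp [hp0, hq0])
      (by simp [hq0 a])
      (by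
        intro w₁ _ w₂ _
        rw [inner_add_right]
        have := mul_le_mul_of_nonneg_left (hq_sub a w₁ w₂) (hlam a)
        linarith [this])
      (by
        intro c hc w _
        rw [real_inner_smul_right, hq_hom a c w hc]; ring)
      (by
        intro w _
        linarith [hx w])
    obtain ⟨u, hu, w', hw', hsum'⟩ := ih x' hx'₁
    have hdiff : ∀ v, ⟪x - x', v⟫ ≤ lam a * q a v := by
      intro v
      rw [inner_sub_left]
      have := hx'₂ v (Set.mem_univ v)
      try dsimp only at this
      linarith
    rcases eq_or_lt_of_le (hlam a) with h0 | hpos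
    · have hxx' : x = x' := by
        have h1 := hdiff (x - x')
        rw [← h0, zero_mul] at h1
        have h2 : x - x' = 0 := by
          rwa [real_inner_self_nonpos] at h1
        have := sub_eq_zero.mp h2
        exact this
      refine ⟨u, hu, w', hw', ?_⟩
      rw [Finset.sum_insert ha, ← h0, zero_smul, zero_add, hsum', hxx']
    · set wa : E := (lam a)⁻¹ • (x - x') with hwa_def
      have hwa : wa ∈ subdiffZero (q a) := by
        intro v
        rw [hwa_def, real_inner_smul_left]
        have h1 := hdiff v
        rw [inv_mul_le_iff₀ hpos]
        linarith
      refine ⟨u, hu, Function.update w' a wa, ?_, ?_⟩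
      · intro j
        rcases eq_or_ne j a with rfl | hj
        · rwa [Function.update_self]
        · rw [Function.update_of_ne hj]; exact hw' j
      · rw [Finset.sum_insert ha, Function.update_self]
        have hrest : ∑ j ∈ s, lam j • Function.update w' a wa j
            = ∑ j ∈ s, lam j • w' j := by
          apply Finset.sum_congr rfl
          intro j hj
          rw [Function.update_of_ne (ne_of_mem_of_not_mem hj ha)]
        rw [hrest]
        have hsmul : lam a • wa = x - x' := by
          rw [hwa_def, smul_smul, mul_inv_cancel₀ hpos.ne', one_smul]
        rw [hsmul]
        rw [← hsum']
        abel


/-- KKT conditions for minimizing a sublinear function over a closed convex cone with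
sublinear inequality constraints, under the Slater condition. -/
theorem sublinear_kkt {k : ℕ}
    (p : EuclideanSpace ℝ (Fin n) → ℝ) (q : Fin k → EuclideanSpace ℝ (Fin n) → ℝ)
    (H : Set (EuclideanSpace ℝ (Fin n)))
    (hp_sub : ∀ v w, p (v + w) ≤ p v + p w)
    (hp_hom : ∀ (c : ℝ) v, 0 ≤ c → p (c • v) = c * p v)
    (hp_cont : Continuous p)
    (hq_sub : ∀ j v w, q j (v + w) ≤ q j v + q j w)
    (hq_hom : ∀ j (c : ℝ) v, 0 ≤ c → q j (c • v) = c * q j v)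
    (hq_cont : ∀ j, Continuous (q j))
    (hH_closed : IsClosed H) (hH_conv : Convex ℝ H)
    (hH_cone : ∀ v ∈ H, ∀ c : ℝ, 0 ≤ c → c • v ∈ H)
    (hopt : ∀ v ∈ H, (∀ j, q j v ≤ 0) → 0 ≤ p v)
    (hslater : ∃ v₀ ∈ H, ∀ j, q j v₀ < 0) :
    ∃ lam : Fin k → ℝ, (∀ j, 0 ≤ lam j) ∧
      ∃ u ∈ subdiffZero p, ∃ w : Fin k → EuclideanSpace ℝ (Fin n),
        (∀ j, w j ∈ subdiffZero (q j)) ∧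
        ∃ z ∈ {xstar : EuclideanSpace ℝ (Fin n) | ∀ v ∈ H, ⟪xstar, v⟫ ≤ 0},
          u + (∑ j, lam j • w j) + z = 0 := by
  have hp0 : p 0 = 0 := by
    have := hp_hom 0 0 le_rfl
    simpa using this
  have hq0 : ∀ j, q j 0 = 0 := fun j => by
    have := hq_hom j 0 0 le_rfl
    simpa using this
  obtain ⟨v₀, hv₀, -⟩ := id hslater
  have hH0 : (0 : E) ∈ H := by
    have := hH_cone v₀ hv₀ 0 le_rfl
    simpa using this
  have hHadd : ∀ w₁ ∈ H, ∀ w₂ ∈ H, w₁ + w₂ ∈ H := by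
    intro w₁ h₁ w₂ h₂
    have hmid : (1/2 : ℝ) • w₁ + (1/2 : ℝ) • w₂ ∈ H :=
      hH_conv h₁ h₂ (by norm_num) (by norm_num) (by norm_num)
    have h2 := hH_cone _ hmid 2 (by norm_num)
    have he : (2 : ℝ) • ((1/2 : ℝ) • w₁ + (1/2 : ℝ) • w₂) = w₁ + w₂ := by
      rw [smul_add, smul_smul, smul_smul]
      norm_num
    rwa [he] at h2
  obtain ⟨lam, hlam, hge⟩ := exists_lam p q H hp_sub hp_hom hq_sub hq_hom
    hH_conv hH0 hopt hslater
  obtain ⟨x, hx1, hx2⟩ := exists_inner_sandwich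
    (fun v => p v + ∑ j, lam j * q j v) (fun _ => 0) H
    hH0 hHadd (fun w hw c hc => hH_cone w hw c hc.le)
    (by
      intro v w
      have h1 := hp_sub v w
      have h2 : ∑ j, lam j * q j (v + w) ≤ ∑ j, (lam j * q j v + lam j * q j w) := by
        apply Finset.sum_le_sum
        intro j _
        have := mul_le_mul_of_nonneg_left (hq_sub j v w) (hlam j)
        linarith
      rw [Finset.sum_add_distrib] at h2
      linarith)
    (by
      intro c v hc
      rw [hp_hom c v hc.le, mul_add, Finset.mul_sum]
      congr 1
      apply Finset.sum_congr rfl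
      intro j _
      rw [hq_hom j c v hc.le]; ring)
    (by simp [hp0, hq0])
    rfl
    (fun _ _ _ _ => by norm_num)
    (fun c _ _ _ => by ring)
    (fun w hw => hge w hw)
  obtain ⟨u, hu, w, hw, hsum⟩ := decomp p q lam hp_sub
    (fun c v hc => hp_hom c v hc.le) hp0 hq_sub
    (fun j c v hc => hq_hom j c v hc.le) hq0 hlam Finset.univ x hx1
  refine ⟨lam, hlam, u, hu, w, hw, -x, ?_, ?_⟩
  · intro v hv
    rw [inner_neg_left]
    have := hx2 v hv
    linarith
  · rw [hsum]
    exact add_neg_cancel x
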